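/- Suppose ∑_{λ∈Λ} |f(λ)|² ≤ C|Ω|·‖f‖² for all f ∈ PW_Ω, where C > 0, Ω ⊂ ℝ has finite positive measure, and Λ ⊂ ℝ. Then there exists K > 0, depending only on Ω, such that #(Λ ∩ I)/|I| ≤ 4C|Ω| for every interval I ⊂ ℝ with |I| ≥ K. -/

import Mathlib

open MeasureTheory ENNReal Filter

/-- The (inverse) Fourier transform with the paper's normalization:
`f(x) = (2π)^{-1/2} ∫ e^{-itx} F(t) dt`. -/
noncomputable def FT (F : ℝ → ℂ) (x : ℝ) : ℂ :=
  (Real.sqrt (2 * Real.pi) : ℂ)⁻¹ * ∫ t : ℝ, Complex.exp (-(Complex.I * t * x)) * F t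

/-- `f` belongs to the Paley–Wiener space `PW_Ω`: it is the Fourier transform of an
`L²` function `F` vanishing outside `Ω` (such `F` is automatically integrable when
`Ω` has finite measure, so `f` is continuous and pointwise evaluation makes sense). -/
def IsPW (Ω : Set ℝ) (f : ℝ → ℂ) : Prop :=
  ∃ F : ℝ → ℂ, MemLp F 2 volume ∧ (∀ t ∉ Ω, F t = 0) ∧ Integrable F volume ∧
    ∀ x, f x = FT F x

/-- `Λ ⊆ ℝ` has separation constant at least `δ`. -/
def Separated (δ : ℝ) (Λ : Set ℝ) : Prop :=
  ∀ x ∈ Λ, ∀ y ∈ Λ, x ≠ y → δ ≤ |x - y|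

/-!
Let `g` be the Paley–Wiener function with spectrum `1_Ω`, so `g 0 = |Ω| / √(2π) ≠ 0`.
Applied to the translates `g (· - s)`, the hypothesis gives `∑_λ |g (λ - s)|² ≤ C |Ω| ‖g‖²`
for every `s`. Integrating in `s` over the interval `I = [a, a + L]` enlarged by `T` on both
sides, each `λ ∈ Λ ∩ I` contributes at least `∫_{-T}^{T} |g|²`, which is `≥ ‖g‖² / 2` once `T`
(depending on `Ω` only) is large. Hence `#(Λ ∩ I) ‖g‖² / 2 ≤ (L + 2T) C |Ω| ‖g‖²`, and `K = 2T`
works. Plancherel is not needed to know `g ∈ L²`: otherwise the Bochner integral `‖g‖²` is `0`,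
the hypothesis forces every sum to vanish, and the same computation gives `Λ ∩ I = ∅`.
-/

open Set
open scoped FourierTransform

-- Unlike `lintegral_tsum`, the index type need not be countable.
theorem tsum_lintegral_le_lintegral_tsum {α ι : Type*} [MeasurableSpace α] {μ : Measure α}
    {f : ι → α → ℝ≥0∞} (hf : ∀ i, AEMeasurable (f i) μ) :
    ∑' i, ∫⁻ a, f i a ∂μ ≤ ∫⁻ a, ∑' i, f i a ∂μ := by
  rw [ENNReal.tsum_eq_iSup_sum]
  refine iSup_le fun s => ?_
  rw [← lintegral_finsetSum' s fun i _ => hf i]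
  exact lintegral_mono fun a => ENNReal.sum_le_tsum s

theorem setLIntegral_Icc_comp_sub_left (φ : ℝ → ℝ≥0∞) (l T : ℝ) :
    ∫⁻ s in Icc (l - T) (l + T), φ (l - s) = ∫⁻ x in Icc (-T) T, φ x := by
  have hmem : ∀ s, s ∈ Icc (l - T) (l + T) ↔ l - s ∈ Icc (-T) T := fun s => by
    simp only [mem_Icc]
    constructor <;> rintro ⟨h₁, h₂⟩ <;> constructor <;> linarith
  calc ∫⁻ s in Icc (l - T) (l + T), φ (l - s)
      = ∫⁻ s, (Icc (-T) T).indicator φ (l - s) := by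
        rw [← lintegral_indicator measurableSet_Icc]
        exact lintegral_congr fun s => by simp only [indicator_apply, hmem]
    _ = ∫⁻ x in Icc (-T) T, φ x := by
        rw [lintegral_sub_left_eq_self, lintegral_indicator measurableSet_Icc]

theorem encard_inter_Icc_mul_le {φ : ℝ → ℝ≥0∞} (hφ : Measurable φ) {Λ : Set ℝ} {M : ℝ≥0∞}
    (hM : ∀ s, ∑' l : Λ, φ (l - s) ≤ M) (a L T : ℝ) :
    (Λ ∩ Icc a (a + L)).encard * ∫⁻ x in Icc (-T) T, φ x ≤ ENNReal.ofReal (L + 2 * T) * M := by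
  set S := Λ ∩ Icc a (a + L)
  set J := Icc (a - T) (a + L + T)
  calc S.encard * ∫⁻ x in Icc (-T) T, φ x
      = ∑' l : S, ∫⁻ s in Icc ((l : ℝ) - T) (l + T), φ (l - s) := by
        simp only [setLIntegral_Icc_comp_sub_left, ENNReal.tsum_set_const]
    _ ≤ ∑' l : S, ∫⁻ s in J, φ (l - s) := by
        refine ENNReal.tsum_le_tsum fun l => lintegral_mono_set (Icc_subset_Icc ?_ ?_)
        · linarith [l.2.2.1]
        · linarith [l.2.2.2]
    _ ≤ ∫⁻ s in J, ∑' l : S, φ (l - s) :=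
        tsum_lintegral_le_lintegral_tsum fun l =>
          (hφ.comp (measurable_const.sub measurable_id)).aemeasurable
    _ ≤ ∫⁻ _ in J, M :=
        lintegral_mono fun s =>
          (ENNReal.tsum_mono_subtype (fun l => φ (l - s)) inter_subset_left).trans (hM s)
    _ = ENNReal.ofReal (L + 2 * T) * M := by
        rw [setLIntegral_const, Real.volume_Icc, mul_comm]
        ring_nf

theorem encard_inter_Icc_le_ofReal {φ : ℝ → ℝ≥0∞} (hφ : Measurable φ) {Λ : Set ℝ} {A T : ℝ}
    (hA : 0 ≤ A) (hc₀ : ∫⁻ x in Icc (-T) T, φ x ≠ 0) (hc : ∫⁻ x in Icc (-T) T, φ x ≠ ⊤)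
    (hM : ∀ s, ∑' l : Λ, φ (l - s) ≤ ENNReal.ofReal A * (2 * ∫⁻ x in Icc (-T) T, φ x))
    {a L : ℝ} (hL : 2 * T ≤ L) :
    (Λ ∩ Icc a (a + L)).encard ≤ ENNReal.ofReal (4 * A * L) := by
  set c := ∫⁻ x in Icc (-T) T, φ x
  rw [← ENNReal.mul_le_mul_iff_left hc₀ hc]
  calc (Λ ∩ Icc a (a + L)).encard * c
      ≤ ENNReal.ofReal (L + 2 * T) * (ENNReal.ofReal A * (2 * c)) :=
        encard_inter_Icc_mul_le hφ hM a L T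
    _ = ENNReal.ofReal (2 * (L + 2 * T) * A) * c := by
        rw [ENNReal.ofReal_mul' hA, ENNReal.ofReal_mul zero_le_two, ENNReal.ofReal_ofNat]
        ring
    _ ≤ ENNReal.ofReal (4 * A * L) * c := by
        gcongr ENNReal.ofReal ?_ * c
        nlinarith

theorem exists_lt_setLIntegral_Icc {φ : ℝ → ℝ≥0∞} (hφ : AEMeasurable φ) {R : ℝ≥0∞}
    (hR : R < ∫⁻ x, φ x) : ∃ T > 0, R < ∫⁻ x in Icc (-T) T, φ x := by
  have h := (aecover_Icc (μ := volume) tendsto_neg_atTop_atBot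
    tendsto_id).lintegral_tendsto_of_countably_generated hφ
  exact ((h.eventually_const_lt hR).and (eventually_gt_atTop 0)).exists.imp
    fun T hT => ⟨hT.2, hT.1⟩

section ContinuousFunction

variable {E : Type*} [NormedAddCommGroup E] {g : ℝ → E}

theorem exists_ofReal_integral_norm_sq_le_two_mul_setLIntegral_Icc (hg : Continuous g)
    (hg0 : g 0 ≠ 0) :
    ∃ T > 0, ENNReal.ofReal (∫ x, ‖g x‖ ^ 2) ≤ 2 * ∫⁻ x in Icc (-T) T, ‖g x‖ₑ ^ 2 ∧
      0 < ∫⁻ x in Icc (-T) T, ‖g x‖ₑ ^ 2 := by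
  set R := ENNReal.ofReal (∫ x, ‖g x‖ ^ 2)
  have hsq : Continuous fun x => ‖g x‖ₑ ^ 2 := by fun_prop
  have hR : R ≤ ∫⁻ x, ‖g x‖ₑ ^ 2 := by
    have h := enorm_integral_le_lintegral_enorm (μ := volume) fun x => ‖g x‖ ^ 2
    simp_rw [enorm_pow, enorm_norm] at h
    rwa [Real.enorm_of_nonneg (integral_nonneg fun x => sq_nonneg ‖g x‖)] at h
  have hpos : 0 < ∫⁻ x, ‖g x‖ₑ ^ 2 := by
    rw [lintegral_pos_iff_support hsq.measurable]
    exact hsq.isOpen_support.measure_pos volume ⟨0, by simpa using hg0⟩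
  have hhalf : R / 2 < ∫⁻ x, ‖g x‖ₑ ^ 2 := by
    rcases eq_or_ne R 0 with h | h
    · simpa [h] using hpos
    · exact (ENNReal.half_lt_self h ENNReal.ofReal_ne_top).trans_le hR
  obtain ⟨T, hT, hRT⟩ := exists_lt_setLIntegral_Icc hsq.aemeasurable hhalf
  refine ⟨T, hT, ?_, pos_of_gt hRT⟩
  rw [mul_comm, ← ENNReal.div_le_iff two_ne_zero ENNReal.ofNat_ne_top]
  exact hRT.le

theorem setLIntegral_Icc_enorm_sq_ne_top (hg : Continuous g) (T : ℝ) :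
    ∫⁻ x in Icc (-T) T, ‖g x‖ₑ ^ 2 ≠ ⊤ := by
  have h := setLIntegral_lt_top_of_isCompact (μ := volume) (s := Icc (-T) T)
    measure_Icc_lt_top.ne isCompact_Icc (f := fun x => ‖g x‖₊ ^ 2) (by fun_prop)
  simp only [ENNReal.coe_pow, ← enorm_eq_nnnorm] at h
  exact h.ne

end ContinuousFunction

theorem FT_eq_fourier (F : ℝ → ℂ) (x : ℝ) :
    FT F x = (Real.sqrt (2 * Real.pi) : ℂ)⁻¹ * 𝓕 F (x / (2 * Real.pi)) := by
  rw [FT, Real.fourier_real_eq_integral_exp_smul]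
  congr 1
  refine integral_congr_ae (Eventually.of_forall fun t => ?_)
  have hπ : (Real.pi : ℂ) ≠ 0 := by exact_mod_cast Real.pi_ne_zero
  simp only [smul_eq_mul]
  congr 2
  push_cast
  field_simp

theorem continuous_FT {F : ℝ → ℂ} (hF : Integrable F) : Continuous (FT F) := by
  have h : Continuous (𝓕 F) :=
    VectorFourier.fourierIntegral_continuous Real.continuous_fourierChar
      (innerSL ℝ).continuous₂ hF
  rw [funext (FT_eq_fourier F)]
  fun_prop

theorem FT_exp_mul (F : ℝ → ℂ) (s x : ℝ) :
    FT (fun t => Complex.exp (Complex.I * t * s) * F t) x = FT F (x - s) := by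
  unfold FT
  congr 1
  refine integral_congr_ae (Eventually.of_forall fun t => ?_)
  simp only
  rw [← mul_assoc, ← Complex.exp_add]
  push_cast
  ring_nf

namespace IsPW

variable {Ω : Set ℝ} {f : ℝ → ℂ}

theorem continuous (hf : IsPW Ω f) : Continuous f := by
  obtain ⟨F, -, -, hF, hfF⟩ := hf
  rw [funext hfF]
  exact continuous_FT hF

theorem comp_sub_right (hf : IsPW Ω f) (s : ℝ) : IsPW Ω fun x => f (x - s) := by
  obtain ⟨F, hF2, hFΩ, hF1, hfF⟩ := hf
  have hexp : ∀ t : ℝ, ‖Complex.exp (Complex.I * t * s)‖ = 1 := fun t => by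
    simp [Complex.norm_exp]
  have hmeas : AEStronglyMeasurable (fun t : ℝ => Complex.exp (Complex.I * t * s)) :=
    (by fun_prop : Continuous fun t : ℝ => Complex.exp (Complex.I * t * s)).aestronglyMeasurable
  refine ⟨fun t => Complex.exp (Complex.I * t * s) * F t, ?_, fun t ht => by simp [hFΩ t ht],
    hF1.bdd_mul hmeas (Eventually.of_forall fun t => (hexp t).le), fun x => by
      rw [FT_exp_mul, ← hfF]⟩
  exact hF2.of_le (hmeas.mul hF2.1) (Eventually.of_forall fun t => by simp [hexp])

end IsPW

theorem isPW_FT_indicator {Ω : Set ℝ} (hΩ : MeasurableSet Ω) (hΩfin : volume Ω ≠ ⊤) :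
    IsPW Ω (FT (Ω.indicator 1)) :=
  ⟨_, memLp_indicator_const 2 hΩ 1 (Or.inr hΩfin), fun _ ht => indicator_of_notMem ht _,
    (integrable_indicator_iff hΩ).2 (integrableOn_const hΩfin), fun _ => rfl⟩

theorem FT_indicator_zero {Ω : Set ℝ} (hΩ : MeasurableSet Ω) :
    FT (Ω.indicator 1) 0 = (Real.sqrt (2 * Real.pi) : ℂ)⁻¹ * (volume Ω).toReal := by
  simp [FT, integral_indicator hΩ, measureReal_def]

/-- Lemma 6 (ii): if the sampling upper bound
`∑_{λ ∈ Λ} |f λ|² ≤ C |Ω| ‖f‖²` holds on `PW_Ω`, then there is `K > 0`, depending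
only on `Ω`, such that `#(Λ ∩ I) ≤ 4 C |Ω| |I|` for every interval `I` of length
at least `K`. -/
theorem stmt13 (Ω : Set ℝ) (hmeas : MeasurableSet Ω) (hpos : 0 < volume Ω)
    (hfin : volume Ω < ⊤) (C : ℝ) (hC : 0 < C) (Λ : Set ℝ)
    (hyp : ∀ f : ℝ → ℂ, IsPW Ω f →
      ∑' l : ↥Λ, (‖f (l : ℝ)‖₊ ^ 2 : ℝ≥0∞) ≤
        ENNReal.ofReal (C * (volume Ω).toReal * ∫ x : ℝ, ‖f x‖ ^ 2)) :
    ∃ K : ℝ, 0 < K ∧ ∀ a L : ℝ, K ≤ L →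
      (Λ ∩ Set.Icc a (a + L)).encard ≤
        ENNReal.ofReal (4 * C * (volume Ω).toReal * L) := by
  set W := (volume Ω).toReal
  have hW : 0 < W := ENNReal.toReal_pos hpos.ne' hfin.ne
  have hg0 : FT (Ω.indicator 1) 0 ≠ 0 := by
    rw [FT_indicator_zero hmeas]
    exact mul_ne_zero (inv_ne_zero (Complex.ofReal_ne_zero.2 (by positivity)))
      (Complex.ofReal_ne_zero.2 hW.ne')
  set g := FT (Ω.indicator 1)
  have hg : IsPW Ω g := isPW_FT_indicator hmeas hfin.ne
  have hgc : Continuous g := hg.continuous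
  obtain ⟨T, hT, hNc, hc⟩ := exists_ofReal_integral_norm_sq_le_two_mul_setLIntegral_Icc hgc hg0
  refine ⟨2 * T, by positivity, fun a L hL => ?_⟩
  rw [mul_assoc 4 C]
  refine encard_inter_Icc_le_ofReal (by fun_prop) (by positivity) hc.ne'
    (setLIntegral_Icc_enorm_sq_ne_top hgc T) (fun s => ?_) hL
  have h := hyp _ (hg.comp_sub_right s)
  simp_rw [← enorm_eq_nnnorm] at h
  rw [integral_sub_right_eq_self (fun x => ‖g x‖ ^ 2) s,
    ENNReal.ofReal_mul' (integral_nonneg fun x => sq_nonneg _)] at h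
  exact h.trans (by gcongr)
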